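/- For any real numbers a, b, r with b ≥ 0, r ≥ 0 and the disk D̄(a+bi, r) disjoint from (−∞,0] (i.e. a²+b²>r² and, if b≤r, a>√(r²−b²) or the disk avoids the negative axis), let A be a log-able real 2×2 matrix with principal disk D̄(a+bi,r). Then ‖log A‖₂ = f_CA(a,b,r) + f_RD(a,b,r) and ⌊log A⌋₂ = f_CA(a,b,r) − f_RD(a,b,r), where, with s = √(a²+b²−r²), f_CA(a,b,r) = √((log s)² + (b·AC(a/s)/s)²) and f_RD(a,b,r) = r·AC(a/s)/s. -/

import Mathlib

noncomputable def opNorm (A : Matrix (Fin 2) (Fin 2) ℝ) : ℝ :=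
  ‖Matrix.toEuclideanCLM (𝕜 := ℝ) (n := Fin 2) A‖

noncomputable def conorm (A : Matrix (Fin 2) (Fin 2) ℝ) : ℝ :=
  Real.sign A.det * (opNorm A⁻¹)⁻¹

noncomputable def arcosh (x : ℝ) : ℝ := Real.log (x + Real.sqrt (x ^ 2 - 1))

noncomputable def AC (x : ℝ) : ℝ :=
  if x < 1 then Real.arccos x / Real.sqrt (1 - x ^ 2)
  else if x = 1 then 1
  else arcosh x / Real.sqrt (x ^ 2 - 1)

noncomputable def AS (x : ℝ) : ℝ :=
  if x = 1 then Real.sqrt (1 / 3) else Real.sqrt ((AC x ^ 2 - 1) / (1 - x ^ 2))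

noncomputable def AT (x : ℝ) : ℝ := (AC x - 1) / AS x

noncomputable def PDcenter (A : Matrix (Fin 2) (Fin 2) ℝ) : ℂ :=
  (((A 0 0 + A 1 1) / 2 : ℝ) : ℂ) + ((|A 1 0 - A 0 1| / 2 : ℝ) : ℂ) * Complex.I

noncomputable def PDradius (A : Matrix (Fin 2) (Fin 2) ℝ) : ℝ :=
  Real.sqrt (((A 0 0 - A 1 1) / 2) ^ 2 + ((A 0 1 + A 1 0) / 2) ^ 2)

noncomputable def PD (A : Matrix (Fin 2) (Fin 2) ℝ) : Set ℂ :=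
  Metric.closedBall (PDcenter A) (PDradius A)

def LogAble (A : Matrix (Fin 2) (Fin 2) ℝ) : Prop :=
  ∀ z ∈ spectrum ℂ (A.map (fun x => (x : ℂ))), ¬(z.im = 0 ∧ z.re ≤ 0)

def IsPrincipalLog (A L : Matrix (Fin 2) (Fin 2) ℝ) : Prop :=
  NormedSpace.exp L = A ∧
    ∀ z ∈ spectrum ℂ (L.map (fun x => (x : ℂ))), z.im ∈ Set.Ioo (-Real.pi) Real.pi

/-!
Identify `ℝ²` with `ℂ`. A real `2 × 2` matrix `M` then acts as `z ↦ ζ z + η z̄`, with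
`ζ = M.rotPart` and `η = M.reflPart`, and `PD(M)` has centre `ζ` or `ζ̄` (whichever lies in the
upper half plane) and radius `|η|`. Rotating `z` so that the two summands point the same way shows
`‖M‖₂ = |ζ| + |η|`; since `det M = |ζ|² - |η|²` and the adjugate has parts `ζ̄, -η`, also
`⌊M⌋₂ = |ζ| - |η|`.

A real logarithm `L` of `A` commutes with `A`. If `L` has distinct eigenvalues `ℓ ± w`, then
`A = α + β L`, whose eigenvalues `a ± β w` must be `e^(ℓ ± w)`; this gives `e^(2ℓ) = det A = s²`,
`s cosh w = a` and `s |sinh w| = |β w|`. Because `w` is real or imaginary with `|Im w| < π`,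
`AC(cosh w) = |w / sinh w|`, i.e. `|β| AC(a/s) = s`. If instead `L - ℓ` is nilpotent, then
`A = e^ℓ (1 + L - ℓ)` directly, with `a = s` and `AC 1 = 1`. Either way `PD(L)` has centre
`log s + i b / |β|` and radius `r / |β|`, and `1 / |β| = AC(a/s) / s`.
-/

open Complex ComplexConjugate

theorem Real.sign_mul_abs (x : ℝ) : Real.sign x * |x| = x := by
  rcases lt_trichotomy x 0 with hx | rfl | hx
  · rw [Real.sign_of_neg hx, abs_of_neg hx]; ring
  · simp
  · rw [Real.sign_of_pos hx, abs_of_pos hx]; ring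

namespace Complex

theorem norm_mul_exp_add_mul_conj_exp (ζ η : ℂ) :
    ‖ζ * exp (((η.arg - ζ.arg) / 2 : ℝ) * I) + η * conj (exp (((η.arg - ζ.arg) / 2 : ℝ) * I))‖ =
      ‖ζ‖ + ‖η‖ := by
  have key : ζ * exp (((η.arg - ζ.arg) / 2 : ℝ) * I) +
        η * conj (exp (((η.arg - ζ.arg) / 2 : ℝ) * I)) =
      ((‖ζ‖ + ‖η‖ : ℝ) : ℂ) * exp (((η.arg + ζ.arg) / 2 : ℝ) * I) := by
    have hζ := norm_mul_exp_arg_mul_I ζ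
    have hη := norm_mul_exp_arg_mul_I η
    generalize ζ.arg = θ, η.arg = φ at hζ hη ⊢
    generalize ‖ζ‖ = ρ at hζ ⊢
    generalize ‖η‖ = σ at hη ⊢
    subst hζ hη
    rw [← exp_conj, map_mul, conj_ofReal, conj_I, mul_assoc, mul_assoc, ← exp_add, ← exp_add]
    push_cast
    ring_nf
  rw [key, norm_mul, norm_exp_ofReal_mul_I, mul_one, norm_real, Real.norm_of_nonneg (by positivity)]

theorem exists_sq_eq_ofReal (d : ℝ) : ∃ u : ℂ, u ^ 2 = d ∧ (u.re = 0 ∨ u.im = 0) := by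
  rcases le_or_gt 0 d with hd | hd
  · refine ⟨Real.sqrt d, ?_, Or.inr (ofReal_im _)⟩
    rw [← ofReal_pow, Real.sq_sqrt hd]
  · refine ⟨Real.sqrt (-d) * I, ?_, Or.inl (by simp)⟩
    rw [mul_pow, I_sq, ← ofReal_pow, Real.sq_sqrt (by linarith)]
    push_cast
    ring

theorem exp_add_ne_exp_sub (x : ℂ) {w : ℂ} (hw : w ≠ 0) (hπ : |w.im| < Real.pi) :
    exp (x + w) ≠ exp (x - w) := by
  rw [Ne, exp_eq_exp_iff_exists_int]
  rintro ⟨n, hn⟩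
  have hwn : w = n * Real.pi * I := by linear_combination hn / 2
  have hn0 : n = 0 := by
    rw [show w.im = n * Real.pi by simp [hwn], abs_mul, abs_of_pos Real.pi_pos] at hπ
    have : |(n : ℝ)| < 1 := by nlinarith [Real.pi_pos]
    exact Int.abs_lt_one_iff.mp (by exact_mod_cast this)
  exact hw (by simp [hwn, hn0])

theorem cosh_sinh_of_exp_add_sub_mem_pair {x w c d : ℂ}
    (hp : exp (x + w) ∈ ({c + d, c - d} : Set ℂ)) (hm : exp (x - w) ∈ ({c + d, c - d} : Set ℂ))
    (hne : exp (x + w) ≠ exp (x - w)) :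
    exp x ^ 2 = c ^ 2 - d ^ 2 ∧ exp x * cosh w = c ∧ ‖exp x * sinh w‖ = ‖d‖ := by
  have hprod : exp (x + w) * exp (x - w) = exp x ^ 2 := by
    rw [← exp_add, sq, ← exp_add]; ring_nf
  have hsum : exp (x + w) + exp (x - w) = 2 * (exp x * cosh w) := by
    rw [cosh, exp_add, sub_eq_add_neg, exp_add]; ring
  have hdiff : exp (x + w) - exp (x - w) = 2 * (exp x * sinh w) := by
    rw [sinh, exp_add, sub_eq_add_neg x, exp_add]; ring
  simp only [Set.mem_insert_iff, Set.mem_singleton_iff] at hp hm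
  rcases hp with hp | hp <;> rcases hm with hm | hm
  · exact absurd (hp.trans hm.symm) hne
  · refine ⟨by rw [← hprod, hp, hm]; ring, by linear_combination (-hsum + hp + hm) / 2, ?_⟩
    rw [show exp x * sinh w = d by linear_combination (-hdiff + hp - hm) / 2]
  · refine ⟨by rw [← hprod, hp, hm]; ring, by linear_combination (-hsum + hp + hm) / 2, ?_⟩
    rw [show exp x * sinh w = -d by linear_combination (-hdiff + hp - hm) / 2, norm_neg]
  · exact absurd (hp.trans hm.symm) hne

end Complex

theorem AC_one : AC 1 = 1 := by simp [AC]

theorem AC_cosh {t : ℝ} (ht : t ≠ 0) : AC (Real.cosh t) = |t| / |Real.sinh t| := by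
  have h1 := Real.one_lt_cosh.mpr ht
  rw [AC, if_neg h1.not_gt, if_neg h1.ne', arcosh, ← Real.arcosh, ← Real.cosh_abs,
    Real.arcosh_cosh (abs_nonneg t), Real.cosh_abs, Real.cosh_sq, add_sub_cancel_right,
    Real.sqrt_sq_eq_abs]

theorem AC_cos {θ : ℝ} (h0 : θ ≠ 0) (hπ : |θ| < Real.pi) :
    AC (Real.cos θ) = |θ| / |Real.sin θ| := by
  have h1 : Real.cos θ < 1 := (Real.cos_le_one θ).lt_of_ne fun h =>
    h0 ((Real.cos_eq_one_iff_of_lt_of_lt (by linarith [neg_abs_le θ, Real.pi_pos])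
      (by linarith [le_abs_self θ, Real.pi_pos])).mp h)
  rw [AC, if_pos h1, ← Real.cos_abs, Real.arccos_cos (abs_nonneg θ) hπ.le, Real.cos_abs,
    ← Real.sin_sq, Real.sqrt_sq_eq_abs]

theorem AC_re_cosh {w : ℂ} (hw : w ≠ 0) (hreal : w.re = 0 ∨ w.im = 0) (hπ : |w.im| < Real.pi) :
    AC (cosh w).re = ‖w‖ / ‖sinh w‖ := by
  rcases hreal with h | h
  · have hw' : w = (w.im : ℂ) * I := by apply Complex.ext <;> simp [h]
    have him : w.im ≠ 0 := fun h' => hw (by rw [hw', h']; simp)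
    rw [hw', cosh_mul_I, sinh_mul_I, ← ofReal_cos, ← ofReal_sin, ofReal_re, norm_mul, norm_mul,
      norm_I, mul_one, mul_one, norm_real, norm_real, Real.norm_eq_abs, Real.norm_eq_abs,
      AC_cos him hπ]
  · have hw' : w = (w.re : ℂ) := by apply Complex.ext <;> simp [h]
    have hre : w.re ≠ 0 := fun h' => hw (by rw [hw', h']; simp)
    rw [hw', ← ofReal_cosh, ← ofReal_sinh, ofReal_re, norm_real, norm_real, Real.norm_eq_abs,
      Real.norm_eq_abs, AC_cosh hre]

theorem abs_mul_AC_div_eq_of_cosh_sinh {w : ℂ} {E a β : ℝ} (hE : 0 < E) (hw : w ≠ 0)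
    (hreal : w.re = 0 ∨ w.im = 0) (hπ : |w.im| < Real.pi) (hsinh0 : sinh w ≠ 0)
    (hcosh : E * cosh w = a) (hsinh : ‖E * sinh w‖ = ‖β * w‖) : |β| * AC (a / E) = E := by
  have hre : (cosh w).re = a / E := by
    rw [← ofReal_re (a / E), ofReal_div, ← hcosh, mul_div_cancel_left₀ _ (ofReal_ne_zero.mpr hE.ne')]
  rw [norm_mul, norm_mul, norm_real, norm_real, Real.norm_of_nonneg hE.le, Real.norm_eq_abs] at hsinh
  rw [← hre, AC_re_cosh hw hreal hπ, mul_div_assoc', ← hsinh, mul_div_assoc,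
    div_self (norm_ne_zero_iff.mpr hsinh0), mul_one]

namespace Matrix

theorem spectrum_fin_two {K : Type*} [Field K] (M : Matrix (Fin 2) (Fin 2) K) {c₁ c₂ : K}
    (hsum : c₁ + c₂ = M.trace) (hprod : c₁ * c₂ = M.det) : spectrum K M = {c₁, c₂} := by
  ext w
  have hchar : (algebraMap K _ w - M).det = (w - c₁) * (w - c₂) := by
    rw [det_fin_two, trace_fin_two] at *
    simp only [Fin.isValue, sub_apply, algebraMap_matrix_apply, ↓reduceIte,
      Algebra.algebraMap_self, RingHom.id_apply, zero_ne_one, zero_sub, one_ne_zero, mul_neg,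
      neg_mul, neg_neg]
    linear_combination w * hsum - hprod
  rw [spectrum.mem_iff, isUnit_iff_isUnit_det, hchar, isUnit_iff_ne_zero, not_ne_iff,
    mul_eq_zero, sub_eq_zero, sub_eq_zero, Set.mem_insert_iff, Set.mem_singleton_iff]

theorem exists_eq_smul_one_add_smul_of_commute {K : Type*} [Field K]
    {M N : Matrix (Fin 2) (Fin 2) K} (hM : ∀ c : K, M ≠ c • 1) (h : Commute M N) :
    ∃ α β : K, N = α • 1 + β • M := by
  set v : Fin 3 → K := ![M 0 0 - M 1 1, M 0 1, M 1 0]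
  set w : Fin 3 → K := ![N 0 0 - N 1 1, N 0 1, N 1 0]
  have hv : v ≠ 0 := fun hv => hM (M 1 1) <| by
    have h₀ := congrFun hv 0
    have h₁ := congrFun hv 1
    have h₂ := congrFun hv 2
    simp [v] at h₀ h₁ h₂
    ext i j
    fin_cases i <;> fin_cases j <;> simp [h₁, h₂]
    linear_combination h₀
  have hvw : crossProduct v w = 0 := by
    have e := congrFun₂ h.eq
    have e00 := e 0 0
    have e01 := e 0 1
    have e10 := e 1 0
    simp only [mul_apply, Fin.sum_univ_two] at e00 e01 e10
    ext i
    fin_cases i <;> simp [v, w, cross_apply]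
    · linear_combination e00
    · linear_combination e10
    · linear_combination e01
  obtain ⟨β, hβ⟩ : ∃ β : K, β • v = w := by
    by_contra! hne
    exact crossProduct_ne_zero_iff_linearIndependent.mpr
      ((LinearIndependent.pair_iff' hv).mpr hne) hvw
  have h₀ := congrFun hβ 0
  have h₁ := congrFun hβ 1
  have h₂ := congrFun hβ 2
  simp [v, w] at h₀ h₁ h₂
  refine ⟨N 1 1 - β * M 1 1, β, ?_⟩
  ext i j
  fin_cases i <;> fin_cases j <;> simp [← h₁, ← h₂]
  linear_combination -h₀

theorem cexp_mem_spectrum_map_exp {n : Type*} [Fintype n] [DecidableEq n]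
    (L : Matrix n n ℝ) {z : ℂ} (hz : z ∈ spectrum ℂ (L.map ofReal)) :
    exp z ∈ spectrum ℂ ((NormedSpace.exp L).map ofReal) := by
  have hmap : (NormedSpace.exp L).map ofReal = NormedSpace.exp (L.map ofReal) := by
    open scoped Norms.Operator in
    exact NormedSpace.map_exp (ofRealHom.mapMatrix : Matrix n n ℝ →+* Matrix n n ℂ)
      (continuous_id.matrix_map continuous_ofReal) L
  rw [hmap, exp_eq_exp_ℂ]
  open scoped Norms.Operator in
  exact spectrum.exp_mem_exp _ hz

theorem exp_smul_one_add_of_mul_self_eq_zero {n : Type*} [Fintype n] [DecidableEq n]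
    (c : ℝ) {N : Matrix n n ℝ} (hN : N * N = 0) :
    NormedSpace.exp (c • 1 + N) = Real.exp c • (1 + N) := by
  have hexpN : NormedSpace.exp N = 1 + N := by
    rw [NormedSpace.exp_eq_tsum ℝ]
    dsimp only
    rw [tsum_eq_sum (s := Finset.range 2)]
    · simp [Finset.sum_range_succ]
    · intro k hk
      obtain ⟨j, rfl⟩ := Nat.exists_eq_add_of_le (not_lt.mp (Finset.mem_range.not.mp hk))
      rw [pow_add, sq, hN, zero_mul, smul_zero]
  have hexpc : NormedSpace.exp (algebraMap ℝ (Matrix n n ℝ) c) =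
      algebraMap ℝ (Matrix n n ℝ) (Real.exp c) := by
    open scoped Norms.Operator in
    exact (NormedSpace.algebraMap_exp_comm c).symm.trans (by rw [Real.exp_eq_exp_ℝ])
  rw [exp_add_of_commute _ _ ((Commute.one_left N).smul_left c), hexpN,
    ← Algebra.algebraMap_eq_smul_one, hexpc, Algebra.smul_def]

variable (M : Matrix (Fin 2) (Fin 2) ℝ)

theorem trace_smul_one_add_smul (α β : ℝ) : (α • 1 + β • M).trace = 2 * α + β * M.trace := by
  simp [trace_fin_two]; ring

theorem det_eq_trace_sq_sub_discr : M.det = (M.trace / 2) ^ 2 - M.discr / 4 := by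
  rw [discr_fin_two]; ring

theorem discr_smul_one_add_smul (α β : ℝ) : (α • 1 + β • M).discr = β ^ 2 * M.discr := by
  simp [discr_fin_two, trace_fin_two, det_fin_two]; ring

theorem sub_smul_one_mul_self :
    (M - (M.trace / 2) • 1) * (M - (M.trace / 2) • 1) = (M.discr / 4) • 1 := by
  ext i j
  fin_cases i <;> fin_cases j <;> simp [mul_apply, discr_fin_two, trace_fin_two, det_fin_two] <;>
    ring

theorem spectrum_map_ofReal {w : ℂ} (hw : 4 * w ^ 2 = M.discr) :
    spectrum ℂ (M.map ofReal) = {((M.trace / 2 : ℝ) : ℂ) + w, ((M.trace / 2 : ℝ) : ℂ) - w} := by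
  rw [discr_fin_two] at hw
  apply spectrum_fin_two
  · simp [trace_fin_two]
  · simp only [det_fin_two, trace_fin_two, map_apply] at hw ⊢
    push_cast at hw ⊢
    linear_combination (-1 / 4 : ℂ) * hw

noncomputable def rotPart : ℂ := ⟨(M 0 0 + M 1 1) / 2, (M 1 0 - M 0 1) / 2⟩

noncomputable def reflPart : ℂ := ⟨(M 0 0 - M 1 1) / 2, (M 0 1 + M 1 0) / 2⟩

theorem toEuclideanCLM_orthonormalBasisOneI_repr (z : ℂ) :
    toEuclideanCLM (𝕜 := ℝ) (n := Fin 2) M (orthonormalBasisOneI.repr z) =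
      orthonormalBasisOneI.repr (rotPart M * z + reflPart M * conj z) := by
  ext i
  fin_cases i <;> simp [rotPart, reflPart, mulVec, dotProduct, Fin.sum_univ_two] <;> ring

theorem norm_toEuclideanCLM_orthonormalBasisOneI_repr (z : ℂ) :
    ‖toEuclideanCLM (𝕜 := ℝ) (n := Fin 2) M (orthonormalBasisOneI.repr z)‖ =
      ‖rotPart M * z + reflPart M * conj z‖ := by
  rw [toEuclideanCLM_orthonormalBasisOneI_repr, LinearIsometryEquiv.norm_map]

theorem opNorm_eq_norm_rotPart_add_norm_reflPart : opNorm M = ‖rotPart M‖ + ‖reflPart M‖ := by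
  set T := toEuclideanCLM (𝕜 := ℝ) (n := Fin 2) M
  set e := orthonormalBasisOneI.repr
  apply le_antisymm
  · refine T.opNorm_le_bound (by positivity) fun x => ?_
    rw [← e.apply_symm_apply x, norm_toEuclideanCLM_orthonormalBasisOneI_repr, e.norm_map]
    calc ‖rotPart M * e.symm x + reflPart M * conj (e.symm x)‖
        ≤ ‖rotPart M‖ * ‖e.symm x‖ + ‖reflPart M‖ * ‖e.symm x‖ := by
          refine (norm_add_le _ _).trans ?_
          rw [norm_mul, norm_mul, RCLike.norm_conj]
      _ = (‖rotPart M‖ + ‖reflPart M‖) * ‖e.symm x‖ := by ring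
  · have h := T.le_opNorm (e (exp (((arg (reflPart M) - arg (rotPart M)) / 2 : ℝ) * I)))
    rwa [norm_toEuclideanCLM_orthonormalBasisOneI_repr, norm_mul_exp_add_mul_conj_exp, e.norm_map,
      norm_exp_ofReal_mul_I, mul_one] at h

theorem rotPart_smul (c : ℝ) : rotPart (c • M) = c * rotPart M := by
  apply Complex.ext <;> simp [rotPart] <;> ring

theorem reflPart_smul (c : ℝ) : reflPart (c • M) = c * reflPart M := by
  apply Complex.ext <;> simp [reflPart] <;> ring

theorem rotPart_adjugate : rotPart M.adjugate = conj (rotPart M) := by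
  apply Complex.ext <;> simp [rotPart, adjugate_fin_two] <;> ring

theorem reflPart_adjugate : reflPart M.adjugate = -reflPart M := by
  apply Complex.ext <;> simp [reflPart, adjugate_fin_two] <;> ring

theorem det_eq_norm_rotPart_sq_sub_norm_reflPart_sq :
    M.det = ‖rotPart M‖ ^ 2 - ‖reflPart M‖ ^ 2 := by
  rw [← normSq_eq_norm_sq, ← normSq_eq_norm_sq, normSq_apply, normSq_apply, det_fin_two]
  simp only [rotPart, reflPart]
  ring

theorem conorm_eq_norm_rotPart_sub_norm_reflPart : conorm M = ‖rotPart M‖ - ‖reflPart M‖ := by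
  have hdet : M.det = (‖rotPart M‖ + ‖reflPart M‖) * (‖rotPart M‖ - ‖reflPart M‖) := by
    rw [det_eq_norm_rotPart_sq_sub_norm_reflPart_sq]; ring
  by_cases h : M.det = 0
  · have : ‖rotPart M‖ = ‖reflPart M‖ := by
      rw [← sq_eq_sq₀ (norm_nonneg _) (norm_nonneg _), ← sub_eq_zero,
        ← det_eq_norm_rotPart_sq_sub_norm_reflPart_sq, h]
    rw [conorm, h, Real.sign_zero, zero_mul, this, sub_self]
  · have hinv : opNorm M⁻¹ = |M.det|⁻¹ * (‖rotPart M‖ + ‖reflPart M‖) := by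
      rw [inv_def, Ring.inverse_eq_inv', opNorm_eq_norm_rotPart_add_norm_reflPart, rotPart_smul,
        reflPart_smul, rotPart_adjugate, reflPart_adjugate, norm_mul, norm_mul, RCLike.norm_conj,
        norm_neg, norm_real, Real.norm_eq_abs, abs_inv]
      ring
    rw [conorm, hinv, mul_inv, inv_inv, ← mul_assoc, Real.sign_mul_abs, hdet, ← div_eq_mul_inv,
      mul_div_cancel_left₀ _ (left_ne_zero_of_mul (hdet ▸ h))]

theorem re_rotPart : (rotPart M).re = M.trace / 2 := by
  simp [trace_fin_two, rotPart]

theorem rotPart_smul_one_add_smul (α β : ℝ) :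
    rotPart (α • 1 + β • M) = α + β * rotPart M := by
  apply Complex.ext <;> simp [rotPart] <;> ring

theorem reflPart_smul_one_add_smul (α β : ℝ) :
    reflPart (α • 1 + β • M) = β * reflPart M := by
  apply Complex.ext <;> simp [reflPart] <;> ring

theorem PDcenter_eq : PDcenter M = (rotPart M).re + |(rotPart M).im| * I := by
  simp [PDcenter, rotPart, abs_div]

theorem PDradius_eq_norm_reflPart : PDradius M = ‖reflPart M‖ := by
  rw [PDradius, Complex.norm_def, normSq_apply]
  simp only [reflPart]
  ring_nf

end Matrix
section PrincipalLog

variable {A L : Matrix (Fin 2) (Fin 2) ℝ}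

theorem exists_eq_smul_one_add_smul_of_exp_eq_of_discr_eq_zero
    (hexp : NormedSpace.exp L = A) (hd : L.discr = 0) :
    ∃ α β : ℝ, A = α • 1 + β • L ∧ Real.exp (L.trace / 2) ^ 2 = A.det ∧
      |β| * AC (A.trace / 2 / Real.exp (L.trace / 2)) = Real.exp (L.trace / 2) := by
  set ℓ := L.trace / 2
  have hN : (L - ℓ • 1) * (L - ℓ • 1) = 0 := by rw [L.sub_smul_one_mul_self, hd]; simp
  have hA : A = (Real.exp ℓ * (1 - ℓ)) • 1 + Real.exp ℓ • L := by
    rw [← hexp, ← add_sub_cancel (ℓ • (1 : Matrix (Fin 2) (Fin 2) ℝ)) L,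
      Matrix.exp_smul_one_add_of_mul_self_eq_zero ℓ hN]
    module
  have htr : A.trace / 2 = Real.exp ℓ := by
    rw [hA, Matrix.trace_smul_one_add_smul]; ring
  refine ⟨_, _, hA, ?_, ?_⟩
  · rw [A.det_eq_trace_sq_sub_discr, htr, hA, Matrix.discr_smul_one_add_smul, hd]; ring
  · rw [htr, div_self (Real.exp_pos ℓ).ne', AC_one, mul_one, abs_of_pos (Real.exp_pos ℓ)]

theorem exists_eq_smul_one_add_smul_of_isPrincipalLog_of_discr_ne_zero
    (hL : IsPrincipalLog A L) (hd : L.discr ≠ 0) :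
    ∃ α β : ℝ, A = α • 1 + β • L ∧ Real.exp (L.trace / 2) ^ 2 = A.det ∧
      |β| * AC (A.trace / 2 / Real.exp (L.trace / 2)) = Real.exp (L.trace / 2) := by
  obtain ⟨hexp, hstrip⟩ := hL
  set ℓ := L.trace / 2
  obtain ⟨u, hu, hreal⟩ := Complex.exists_sq_eq_ofReal L.discr
  set w := u / 2
  have hw : 4 * w ^ 2 = L.discr := by rw [← hu]; ring
  have hw0 : w ≠ 0 := fun h => hd (by exact_mod_cast (show (L.discr : ℂ) = 0 by rw [← hw, h]; ring))
  have hwreal : w.re = 0 ∨ w.im = 0 := by simpa [w] using hreal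
  have hspecL := L.spectrum_map_ofReal hw
  have hmemp : (ℓ : ℂ) + w ∈ spectrum ℂ (L.map ofReal) := by
    rw [hspecL]; exact Set.mem_insert _ _
  have hmemm : (ℓ : ℂ) - w ∈ spectrum ℂ (L.map ofReal) := by
    rw [hspecL]; exact Set.mem_insert_of_mem _ rfl
  have hπ : |w.im| < Real.pi := by
    have := hstrip _ hmemp
    simp only [add_im, ofReal_im, zero_add, Set.mem_Ioo] at this
    exact abs_lt.mpr this
  have hne := Complex.exp_add_ne_exp_sub (ℓ : ℂ) hw0 hπ
  obtain ⟨α, β, hA⟩ := Matrix.exists_eq_smul_one_add_smul_of_commute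
    (fun c hc => hd (by rw [hc, ← add_zero (c • 1), ← zero_smul ℝ L,
      Matrix.discr_smul_one_add_smul]; ring))
    (hexp ▸ (Commute.refl L).exp_right)
  have hspecA : spectrum ℂ (A.map ofReal) =
      {((A.trace / 2 : ℝ) : ℂ) + β * w, ((A.trace / 2 : ℝ) : ℂ) - β * w} :=
    A.spectrum_map_ofReal (by rw [hA, Matrix.discr_smul_one_add_smul]; push_cast; rw [← hw]; ring)
  have hp := Matrix.cexp_mem_spectrum_map_exp L hmemp
  have hm := Matrix.cexp_mem_spectrum_map_exp L hmemm
  rw [hexp, hspecA] at hp hm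
  obtain ⟨hsq, hcosh, hsinh⟩ := Complex.cosh_sinh_of_exp_add_sub_mem_pair hp hm hne
  rw [← ofReal_exp] at hcosh hsinh
  refine ⟨α, β, hA, ?_, ?_⟩
  · have hdet : ((Real.exp ℓ ^ 2 : ℝ) : ℂ) = A.det := by
      rw [A.det_eq_trace_sq_sub_discr, hA, Matrix.discr_smul_one_add_smul, ← hA]
      push_cast at hsq ⊢
      linear_combination hsq - (β ^ 2 / 4 : ℂ) * hw
    exact_mod_cast hdet
  · refine abs_mul_AC_div_eq_of_cosh_sinh (Real.exp_pos ℓ) hw0 hwreal hπ (fun h => hne ?_) hcosh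
      hsinh
    have : exp w = exp (-w) := by rw [← cosh_add_sinh, ← cosh_sub_sinh, h, add_zero, sub_zero]
    rw [sub_eq_add_neg, exp_add, exp_add, this]

theorem exists_eq_smul_one_add_smul_of_isPrincipalLog (hL : IsPrincipalLog A L) :
    ∃ α β : ℝ, A = α • 1 + β • L ∧ Real.exp (L.trace / 2) ^ 2 = A.det ∧
      |β| * AC (A.trace / 2 / Real.exp (L.trace / 2)) = Real.exp (L.trace / 2) :=
  if hd : L.discr = 0 then exists_eq_smul_one_add_smul_of_exp_eq_of_discr_eq_zero hL.1 hd
  else exists_eq_smul_one_add_smul_of_isPrincipalLog_of_discr_ne_zero hL hd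

theorem rotPart_reflPart_of_isPrincipalLog (hL : IsPrincipalLog A L) :
    L.rotPart.re = Real.log √A.det ∧
      |L.rotPart.im| = |A.rotPart.im| * AC (A.rotPart.re / √A.det) / √A.det ∧
      ‖L.reflPart‖ = ‖A.reflPart‖ * AC (A.rotPart.re / √A.det) / √A.det := by
  obtain ⟨α, β, hA, hdet, hAC⟩ := exists_eq_smul_one_add_smul_of_isPrincipalLog hL
  have hs : √A.det = Real.exp (L.trace / 2) := by rw [← hdet, Real.sqrt_sq (Real.exp_pos _).le]
  rw [← A.re_rotPart, ← hs] at hAC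
  have hβ : |β| * (AC (A.rotPart.re / √A.det) / √A.det) = 1 := by
    rw [mul_div_assoc', hAC, div_self (hs ▸ (Real.exp_pos _).ne')]
  have him : A.rotPart.im = β * L.rotPart.im := by
    rw [hA, Matrix.rotPart_smul_one_add_smul]
    simp only [add_im, ofReal_im, mul_im, ofReal_re, zero_add, zero_mul, add_zero]
  have hrefl : A.reflPart = β * L.reflPart := by rw [hA, Matrix.reflPart_smul_one_add_smul]
  refine ⟨by rw [hs, Real.log_exp, L.re_rotPart], ?_, ?_⟩
  · rw [him, abs_mul]; linear_combination -|L.rotPart.im| * hβ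
  · rw [hrefl, norm_mul, norm_real, Real.norm_eq_abs]; linear_combination -‖L.reflPart‖ * hβ

end PrincipalLog

theorem stmt9_general (a b r : ℝ)
    (A L : Matrix (Fin 2) (Fin 2) ℝ)
    (hcenter : PDcenter A = (a : ℂ) + (b : ℂ) * Complex.I) (hradius : PDradius A = r)
    (hL : IsPrincipalLog A L) :
    opNorm L =
      Real.sqrt ((Real.log (Real.sqrt (a ^ 2 + b ^ 2 - r ^ 2))) ^ 2 +
          (b * AC (a / Real.sqrt (a ^ 2 + b ^ 2 - r ^ 2)) /
            Real.sqrt (a ^ 2 + b ^ 2 - r ^ 2)) ^ 2) +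
        r * AC (a / Real.sqrt (a ^ 2 + b ^ 2 - r ^ 2)) / Real.sqrt (a ^ 2 + b ^ 2 - r ^ 2) ∧
    conorm L =
      Real.sqrt ((Real.log (Real.sqrt (a ^ 2 + b ^ 2 - r ^ 2))) ^ 2 +
          (b * AC (a / Real.sqrt (a ^ 2 + b ^ 2 - r ^ 2)) /
            Real.sqrt (a ^ 2 + b ^ 2 - r ^ 2)) ^ 2) -
        r * AC (a / Real.sqrt (a ^ 2 + b ^ 2 - r ^ 2)) / Real.sqrt (a ^ 2 + b ^ 2 - r ^ 2) := by
  rw [A.PDcenter_eq, Complex.ext_iff] at hcenter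
  simp only [add_re, ofReal_re, mul_re, I_re, mul_zero, ofReal_im, I_im, mul_one, sub_self,
    add_zero, add_im, mul_im, zero_add] at hcenter
  obtain ⟨hre, him⟩ := hcenter
  rw [A.PDradius_eq_norm_reflPart] at hradius
  have hdet : A.det = a ^ 2 + b ^ 2 - r ^ 2 := by
    rw [A.det_eq_norm_rotPart_sq_sub_norm_reflPart_sq, norm_eq_sqrt_sq_add_sq,
      Real.sq_sqrt (by positivity), hradius, hre, ← sq_abs A.rotPart.im, him]
  obtain ⟨hℓ, him', hrefl⟩ := rotPart_reflPart_of_isPrincipalLog hL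
  simp only [hdet, hre, him, hradius] at hℓ him' hrefl
  rw [L.opNorm_eq_norm_rotPart_add_norm_reflPart, L.conorm_eq_norm_rotPart_sub_norm_reflPart,
    norm_eq_sqrt_sq_add_sq, ← sq_abs L.rotPart.im, hℓ, him', hrefl]
  exact ⟨rfl, rfl⟩

theorem stmt9 (a b r : ℝ) (hb : 0 ≤ b) (hr : 0 ≤ r)
    (hdisk : ∀ z ∈ Metric.closedBall ((a : ℂ) + (b : ℂ) * Complex.I) r,
      ¬(z.im = 0 ∧ z.re ≤ 0))
    (A L : Matrix (Fin 2) (Fin 2) ℝ) (hA : LogAble A)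
    (hcenter : PDcenter A = (a : ℂ) + (b : ℂ) * Complex.I) (hradius : PDradius A = r)
    (hL : IsPrincipalLog A L) :
    opNorm L =
      Real.sqrt ((Real.log (Real.sqrt (a ^ 2 + b ^ 2 - r ^ 2))) ^ 2 +
          (b * AC (a / Real.sqrt (a ^ 2 + b ^ 2 - r ^ 2)) /
            Real.sqrt (a ^ 2 + b ^ 2 - r ^ 2)) ^ 2) +
        r * AC (a / Real.sqrt (a ^ 2 + b ^ 2 - r ^ 2)) / Real.sqrt (a ^ 2 + b ^ 2 - r ^ 2) ∧
    conorm L =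
      Real.sqrt ((Real.log (Real.sqrt (a ^ 2 + b ^ 2 - r ^ 2))) ^ 2 +
          (b * AC (a / Real.sqrt (a ^ 2 + b ^ 2 - r ^ 2)) /
            Real.sqrt (a ^ 2 + b ^ 2 - r ^ 2)) ^ 2) -
        r * AC (a / Real.sqrt (a ^ 2 + b ^ 2 - r ^ 2)) / Real.sqrt (a ^ 2 + b ^ 2 - r ^ 2) :=
  stmt9_general a b r A L hcenter hradius hL
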